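/- arXiv:2305.00075 — 6 statements merged into one kernel-verified Lean document; each statement's English description precedes it below -/
import Mathlib

section
/- Let X be a Polish space, c : X × X → [0,∞] lower semi-continuous, symmetric, with c(x,x)=0, and satisfying the compactness property: if (x_n) is bounded and sup_n c(x_n,x_n') < ∞ then ((x_n,x_n')) is precompact in X × X. Let c_n be the approximations c_n := min{ inf_{(x̃,x̃')} { c(x̃,x̃') + n d(x,x̃) + n d(x',x̃') }, n }. For a finite nonempty set A of indices, define c_{A,n}((x_i)_{i∈A}) := inf_{x'∈X} Σ_{i∈A} c_n(x', x_i) and c_A((x_i)_{i∈A}) := inf_{x'∈X} Σ_{i∈A} c(x', x_i). Then for every tuple (x_i)_{i∈A}, the sequence c_{A,n}((x_i)) is nondecreasing in n and converges to c_A((x_i)) as n → ∞. -/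
/-!
The approximations `lipschitzApprox c n` increase with `n` and, by lower semicontinuity of `c`,
converge to `c`; this gives monotonicity and `c_{A,n} ≤ c_A`. Conversely, let `S = sup_n c_{A,n}`
and take near-minimisers `y n` of `c_{A,n}`. Since `c_n (y n, x i₀) ≤ S < n`, the pair
`(y n, x i₀)` lies within `(S + 1) / n` of a pair `q n` with `c (q n) < S + 1`, and the compactness
property makes `q n`, hence `y n`, converge along a subsequence to some `a`. As `c_m (·, z)` is
`m`-Lipschitz, `∑ i, c_m (a, x i) ≤ S` for every `m`, and letting `m → ∞` gives `c_A ≤ S`.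
-/

open ENNReal Filter Topology Finset

section Approx

variable {X : Type*} [PseudoEMetricSpace X]

noncomputable def lipschitzApprox (c : X × X → ℝ≥0∞) (n : ℕ) (p : X × X) : ℝ≥0∞ :=
  min (⨅ q : X × X, c q + (n : ℝ≥0∞) * edist p.1 q.1 + (n : ℝ≥0∞) * edist p.2 q.2) n

variable {c : X × X → ℝ≥0∞}

theorem monotone_lipschitzApprox : Monotone (lipschitzApprox c) := by
  intro m n hmn p
  have hmn' : (m : ℝ≥0∞) ≤ n := by exact_mod_cast hmn
  exact min_le_min (iInf_mono fun q => by gcongr) hmn'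

theorem lipschitzApprox_le (n : ℕ) (p : X × X) : lipschitzApprox c n p ≤ c p :=
  (min_le_left _ _).trans <| iInf_le_of_le p <| by simp

theorem lipschitzApprox_le_add_edist_fst (n : ℕ) (y y' z : X) :
    lipschitzApprox c n (y, z) ≤ lipschitzApprox c n (y', z) + n * edist y y' := by
  rw [lipschitzApprox, lipschitzApprox, ← min_add_add_right, ENNReal.iInf_add]
  refine min_le_min (iInf_mono fun q => ?_) le_self_add
  calc c q + n * edist y q.1 + n * edist z q.2
      ≤ c q + n * (edist y y' + edist y' q.1) + n * edist z q.2 := by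
        gcongr; exact edist_triangle _ _ _
    _ = c q + n * edist y' q.1 + n * edist z q.2 + n * edist y y' := by ring

theorem exists_edist_lt_of_lipschitzApprox_lt {n : ℕ} {p : X × X} {t : ℝ≥0∞}
    (hp : lipschitzApprox c n p < t) (htn : t ≤ n) :
    ∃ q, c q < t ∧ edist p q < t / n := by
  have hinf : (⨅ q : X × X, c q + n * edist p.1 q.1 + n * edist p.2 q.2) < t :=
    (min_lt_iff.1 hp).resolve_right htn.not_gt
  obtain ⟨q, hq⟩ := iInf_lt_iff.1 hinf
  have hn : (n : ℝ≥0∞) ≠ 0 := (pos_of_gt hp |>.trans_le htn).ne'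
  have hdist : ∀ e, n * e < t → e < t / n := fun e he => by
    rwa [ENNReal.lt_div_iff_mul_lt (.inl hn) (.inl (natCast_ne_top n)), mul_comm]
  refine ⟨q, (le_self_add.trans le_self_add).trans_lt hq, ?_⟩
  rw [Prod.edist_eq]
  exact max_lt (hdist _ ((le_add_self.trans le_self_add).trans_lt hq))
    (hdist _ (le_add_self.trans_lt hq))

theorem iSup_lipschitzApprox (hc : LowerSemicontinuous c) (p : X × X) :
    ⨆ n, lipschitzApprox c n p = c p := by
  refine le_antisymm (iSup_le fun n => lipschitzApprox_le n p)
    (le_of_forall_gt_imp_ge_of_dense fun t ht => ?_)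
  by_contra! htc
  obtain ⟨δ, hδ, hball⟩ := EMetric.mem_nhds_iff.1 (hc p t htc)
  obtain ⟨n, hn⟩ := ENNReal.exists_nat_gt
    (max_ne_top (ENNReal.div_ne_top htc.ne_top hδ.ne') htc.ne_top)
  obtain ⟨q, hqc, hpq⟩ := exists_edist_lt_of_lipschitzApprox_lt
    ((le_iSup (lipschitzApprox c · p) n).trans_lt ht) (le_max_right _ _ |>.trans hn.le)
  have htδ : t / n ≤ δ := ENNReal.div_le_of_le_mul'
    ((ENNReal.div_lt_iff (.inl hδ.ne') (.inr htc.ne_top)).1 ((le_max_left _ _).trans_lt hn)).le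
  exact (hball (Metric.mem_eball'.2 (hpq.trans_le htδ))).not_gt hqc

end Approx

section Barycenter

variable {X ι : Type*}

noncomputable def barycenterCost (c : X × X → ℝ≥0∞) (A : Finset ι) (x : ι → X) : ℝ≥0∞ :=
  ⨅ y, ∑ i ∈ A, c (y, x i)

theorem barycenterCost_mono {c c' : X × X → ℝ≥0∞} (h : c ≤ c') (A : Finset ι) (x : ι → X) :
    barycenterCost c A x ≤ barycenterCost c' A x :=
  iInf_mono fun _ => sum_le_sum fun _ _ => h _

variable [PseudoEMetricSpace X] {c : X × X → ℝ≥0∞} (A : Finset ι) (x : ι → X)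

theorem sum_lipschitzApprox_le_add_edist (n : ℕ) (y y' : X) :
    ∑ i ∈ A, lipschitzApprox c n (y, x i)
      ≤ ∑ i ∈ A, lipschitzApprox c n (y', x i) + #A * n * edist y y' := by
  calc ∑ i ∈ A, lipschitzApprox c n (y, x i)
      ≤ ∑ i ∈ A, (lipschitzApprox c n (y', x i) + n * edist y y') :=
        sum_le_sum fun i _ => lipschitzApprox_le_add_edist_fst n y y' (x i)
    _ = ∑ i ∈ A, lipschitzApprox c n (y', x i) + #A * n * edist y y' := by
        rw [sum_add_distrib, sum_const, nsmul_eq_mul, mul_assoc]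

theorem sum_le_of_tendsto_of_sum_lipschitzApprox_le (hc : LowerSemicontinuous c)
    {β : Type*} {l : Filter β} [l.NeBot] {y : β → X} {a : X} (hy : Tendsto y l (𝓝 a))
    {k : β → ℕ} (hk : Tendsto k l atTop) {S : ℝ≥0∞} {ε : β → ℝ≥0∞} (hε : Tendsto ε l (𝓝 0))
    (h : ∀ b, ∑ i ∈ A, lipschitzApprox c (k b) (y b, x i) ≤ S + ε b) :
    ∑ i ∈ A, c (a, x i) ≤ S := by
  simp_rw [← iSup_lipschitzApprox hc]
  rw [ENNReal.finsetSum_iSup_of_monotone (f := fun i n => lipschitzApprox c n (a, x i))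
    fun i _ _ hmn => monotone_lipschitzApprox hmn _]
  refine iSup_le fun m => ?_
  have hlim : Tendsto (fun b => S + ε b + #A * m * edist a (y b)) l (𝓝 S) := by
    have hya : Tendsto (fun b => edist a (y b)) l (𝓝 0) := by
      simpa only [edist_comm] using tendsto_iff_edist_tendsto_0.1 hy
    simpa using (tendsto_const_nhds.add hε).add
      (ENNReal.Tendsto.const_mul hya (.inr (by finiteness)))
  refine ge_of_tendsto hlim ((hk.eventually_ge_atTop m).mono fun b hmk => ?_)
  calc ∑ i ∈ A, lipschitzApprox c m (a, x i)
      ≤ ∑ i ∈ A, lipschitzApprox c m (y b, x i) + #A * m * edist a (y b) :=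
        sum_lipschitzApprox_le_add_edist A x m a (y b)
    _ ≤ ∑ i ∈ A, lipschitzApprox c (k b) (y b, x i) + #A * m * edist a (y b) := by
        gcongr with i; exact monotone_lipschitzApprox hmk _
    _ ≤ S + ε b + #A * m * edist a (y b) := by gcongr; exact h b

end Barycenter

section Compactness

variable {X : Type*} [PseudoMetricSpace X] {c : X × X → ℝ≥0∞}

theorem exists_strictMono_tendsto_of_lipschitzApprox_le (hsymm : ∀ x y : X, c (x, y) = c (y, x))
    (hcomp : ∀ (x x' : ℕ → X), Bornology.IsBounded (Set.range x) →
      (∃ M : ℝ≥0∞, M < ⊤ ∧ ∀ n, c (x n, x' n) ≤ M) →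
      IsCompact (closure (Set.range fun n => (x n, x' n))))
    {y : ℕ → X} {z : X} {S : ℝ≥0∞} (hS : S ≠ ⊤) (h : ∀ n, lipschitzApprox c n (y n, z) ≤ S) :
    ∃ a, ∃ φ : ℕ → ℕ, StrictMono φ ∧ Tendsto (y ∘ φ) atTop (𝓝 a) := by
  obtain ⟨N, hN⟩ := ENNReal.exists_nat_gt (add_ne_top.2 ⟨hS, one_ne_top⟩)
  have hN_le : ∀ k, S + 1 ≤ (k + N : ℕ) := fun k => hN.le.trans (by exact_mod_cast le_add_self)
  have hnear : ∀ k, ∃ q, c q < S + 1 ∧ edist (y (k + N), z) q < (S + 1) / (k + N : ℕ) :=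
    fun k => exists_edist_lt_of_lipschitzApprox_lt
      ((h _).trans_lt (ENNReal.lt_add_right hS one_ne_zero)) (hN_le k)
  choose q hqc hqd using hnear
  have hfst : ∀ k, edist (y (k + N)) (q k).1 < (S + 1) / (k + N : ℕ) := fun k =>
    (le_max_left _ _).trans_lt ((Prod.edist_eq _ _).symm.trans_lt (hqd k))
  have hsnd : ∀ k, edist z (q k).2 < 1 := fun k =>
    ((le_max_right _ _).trans_lt ((Prod.edist_eq _ _).symm.trans_lt (hqd k))).trans_le
      (ENNReal.div_le_of_le_mul (by rw [one_mul]; exact hN_le k))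
  have hbdd : Bornology.IsBounded (Set.range fun k => (q k).2) := by
    refine (Metric.isBounded_ball (x := z) (r := 1)).subset (Set.range_subset_iff.2 fun k => ?_)
    rw [Metric.mem_ball, ← edist_lt_ofReal, ENNReal.ofReal_one, edist_comm]
    exact hsnd k
  obtain ⟨p, -, φ, hφ, hlim⟩ :=
    (hcomp _ _ hbdd ⟨S + 1, by finiteness, fun k => (hsymm _ _ ▸ hqc k).le⟩).tendsto_subseq
      fun k => subset_closure (Set.mem_range_self k)
  refine ⟨p.2, fun j => φ j + N, fun _ _ hij => Nat.add_lt_add_right (hφ hij) N, ?_⟩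
  have hqa : Tendsto (fun j => edist (q (φ j)).1 p.2) atTop (𝓝 0) :=
    tendsto_iff_edist_tendsto_0.1 ((continuous_snd.tendsto _).comp hlim)
  have hyq : Tendsto (fun j => edist (y (φ j + N)) (q (φ j)).1) atTop (𝓝 0) := by
    have hφN : Tendsto (fun j => φ j + N) atTop atTop :=
      (tendsto_add_atTop_nat N).comp hφ.tendsto_atTop
    have hbound : Tendsto (fun j => (S + 1) / ((φ j + N : ℕ) : ℝ≥0∞)) atTop (𝓝 0) := by
      simpa using ENNReal.Tendsto.const_div (tendsto_nat_nhds_top.comp hφN) (.inr (by finiteness))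
    exact tendsto_of_tendsto_of_tendsto_of_le_of_le tendsto_const_nhds hbound (fun _ => zero_le)
      fun j => (hfst (φ j)).le
  refine tendsto_iff_edist_tendsto_0.2 (tendsto_of_tendsto_of_tendsto_of_le_of_le
    tendsto_const_nhds ?_ (fun _ => zero_le) fun j => edist_triangle _ (q (φ j)).1 _)
  simpa using hyq.add hqa

theorem iSup_barycenterCost_lipschitzApprox {ι : Type*} (hc : LowerSemicontinuous c)
    (hsymm : ∀ x y : X, c (x, y) = c (y, x))
    (hcomp : ∀ (x x' : ℕ → X), Bornology.IsBounded (Set.range x) →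
      (∃ M : ℝ≥0∞, M < ⊤ ∧ ∀ n, c (x n, x' n) ≤ M) →
      IsCompact (closure (Set.range fun n => (x n, x' n))))
    {A : Finset ι} (hA : A.Nonempty) (x : ι → X) :
    ⨆ n, barycenterCost (lipschitzApprox c n) A x = barycenterCost c A x := by
  refine le_antisymm (iSup_le fun n => barycenterCost_mono (lipschitzApprox_le n) A x) ?_
  set S := ⨆ n, barycenterCost (lipschitzApprox c n) A x
  rcases eq_or_ne S ⊤ with hS | hS
  · exact hS ▸ le_top
  have hnear : ∀ n : ℕ, ∃ y,
      ∑ i ∈ A, lipschitzApprox c n (y, x i) < S + ((n + 1 : ℕ) : ℝ≥0∞)⁻¹ := fun n =>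
    iInf_lt_iff.1 <| (le_iSup (fun n => barycenterCost (lipschitzApprox c n) A x) n).trans_lt
      (ENNReal.lt_add_right hS (by simp))
  choose y hy using hnear
  obtain ⟨i₀, hi₀⟩ := hA
  have hy_i₀ : ∀ n, lipschitzApprox c n (y n, x i₀) ≤ S + 1 := fun n =>
    (single_le_sum (fun _ _ => zero_le) hi₀).trans <| (hy n).le.trans <| by
      gcongr; exact ENNReal.inv_le_one.2 (by exact_mod_cast Nat.le_add_left 1 n)
  obtain ⟨a, φ, hφ, hya⟩ :=
    exists_strictMono_tendsto_of_lipschitzApprox_le hsymm hcomp (by finiteness) hy_i₀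
  have hε : Tendsto (fun j => ((φ j + 1 : ℕ) : ℝ≥0∞)⁻¹) atTop (𝓝 0) :=
    ENNReal.tendsto_inv_nat_nhds_zero.comp ((tendsto_add_atTop_nat 1).comp hφ.tendsto_atTop)
  exact iInf_le_of_le a <| sum_le_of_tendsto_of_sum_lipschitzApprox_le A x hc hya
    hφ.tendsto_atTop hε fun j => (hy (φ j)).le

end Compactness

theorem stmt3_general {X : Type*} [MetricSpace X]
    (c : X × X → ℝ≥0∞) (hc : LowerSemicontinuous c)
    (hsymm : ∀ x y : X, c (x, y) = c (y, x))
    (hcomp : ∀ (x x' : ℕ → X), Bornology.IsBounded (Set.range x) →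
      (∃ M : ℝ≥0∞, M < ⊤ ∧ ∀ n, c (x n, x' n) ≤ M) →
      IsCompact (closure (Set.range fun n => (x n, x' n))))
    (cn : ℕ → X × X → ℝ≥0∞)
    (hcn : ∀ (n : ℕ) (p : X × X), cn n p =
      min (⨅ q : X × X, c q + (n : ℝ≥0∞) * edist p.1 q.1 + (n : ℝ≥0∞) * edist p.2 q.2)
        (n : ℝ≥0∞))
    {ι : Type*} (A : Finset ι) (hA : A.Nonempty) (x : ι → X) :
    Monotone (fun n => ⨅ x' : X, ∑ i ∈ A, cn n (x', x i)) ∧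
    Tendsto (fun n => ⨅ x' : X, ∑ i ∈ A, cn n (x', x i)) atTop
      (nhds (⨅ x' : X, ∑ i ∈ A, c (x', x i))) := by
  obtain rfl : cn = lipschitzApprox c := funext₂ hcn
  have hmono : Monotone fun n => barycenterCost (lipschitzApprox c n) A x :=
    fun m n hmn => barycenterCost_mono (monotone_lipschitzApprox hmn) A x
  refine ⟨hmono, ?_⟩
  change Tendsto (fun n => barycenterCost (lipschitzApprox c n) A x) atTop
    (𝓝 (barycenterCost c A x))
  rw [← iSup_barycenterCost_lipschitzApprox hc hsymm hcomp hA x]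
  exact tendsto_atTop_iSup hmono

/-- Monotone convergence of the approximate costs `c_{A,n}` toward `c_A`. -/
theorem stmt3 {X : Type*} [MetricSpace X] [PolishSpace X]
    (c : X × X → ℝ≥0∞) (hc : LowerSemicontinuous c)
    (hsymm : ∀ x y : X, c (x, y) = c (y, x)) (hdiag : ∀ x : X, c (x, x) = 0)
    (hcomp : ∀ (x x' : ℕ → X), Bornology.IsBounded (Set.range x) →
      (∃ M : ℝ≥0∞, M < ⊤ ∧ ∀ n, c (x n, x' n) ≤ M) →
      IsCompact (closure (Set.range fun n => (x n, x' n))))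
    (cn : ℕ → X × X → ℝ≥0∞)
    (hcn : ∀ (n : ℕ) (p : X × X), cn n p =
      min (⨅ q : X × X, c q + (n : ℝ≥0∞) * edist p.1 q.1 + (n : ℝ≥0∞) * edist p.2 q.2)
        (n : ℝ≥0∞))
    {ι : Type*} (A : Finset ι) (hA : A.Nonempty) (x : ι → X) :
    Monotone (fun n => ⨅ x' : X, ∑ i ∈ A, cn n (x', x i)) ∧
    Tendsto (fun n => ⨅ x' : X, ∑ i ∈ A, cn n (x', x i)) atTop
      (nhds (⨅ x' : X, ∑ i ∈ A, c (x', x i))) :=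
  stmt3_general c hc hsymm hcomp cn hcn A hA x
end

section
/- Let μ be a finite positive Borel measure on a measurable space X, and let (g_n) be a sequence of measurable functions with 0 ≤ g_n ≤ 1 that converges to g in the weak* topology of L∞(X;μ), meaning ∫ g_n q dμ → ∫ g q dμ for all q ∈ L¹(X;μ). Then for μ-almost every x ∈ X, limsup_{n→∞} g_n(x) ≥ g(x). -/
/-!
Testing the weak* convergence against the indicator of a measurable set `s` gives
`∫ g_n → ∫ g` over `s`, while the reverse Fatou lemma (the `g_n` are bounded by `1` and `μ` is
finite) bounds the limit of `∫ g_n` over `s` by the integral of `limsup g_n`. Hence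
`∫ g ≤ ∫ limsup g_n` over every measurable set, which forces `g ≤ limsup g_n` almost everywhere.
-/

open MeasureTheory Filter Topology

lemma limsup_mem_Icc_of_forall_mem {u : ℕ → ℝ} {a b : ℝ} (hu : ∀ n, u n ∈ Set.Icc a b) :
    limsup u atTop ∈ Set.Icc a b :=
  ⟨le_limsup_of_frequently_le (.of_forall fun n => (hu n).1)
      (isBoundedUnder_of ⟨b, fun n => (hu n).2⟩),
    limsup_le_of_le (isBoundedUnder_of ⟨a, fun n => (hu n).1⟩).isCoboundedUnder_le
      (.of_forall fun n => (hu n).2)⟩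

section

variable {X : Type*} [MeasurableSpace X] {μ : Measure X}

lemma integrable_of_forall_mem_Icc [IsFiniteMeasure μ] {f : X → ℝ} {C : ℝ}
    (hf : Measurable f) (hfC : ∀ x, f x ∈ Set.Icc 0 C) : Integrable f μ :=
  .of_bound hf.aestronglyMeasurable C <| .of_forall fun x => by
    rw [Real.norm_of_nonneg (hfC x).1]; exact (hfC x).2

lemma le_integral_limsup_of_tendsto [IsFiniteMeasure μ] {f : ℕ → X → ℝ} {C L : ℝ}
    (hf : ∀ n, Measurable (f n)) (hfC : ∀ n x, f n x ∈ Set.Icc 0 C)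
    (hL : Tendsto (fun n => ∫ x, f n x ∂μ) atTop (𝓝 L)) :
    L ≤ ∫ x, limsup (fun n => f n x) atTop ∂μ := by
  have hlimsupC x : limsup (fun n => f n x) atTop ∈ Set.Icc 0 C :=
    limsup_mem_Icc_of_forall_mem (hfC · x)
  have hofReal_limsup x : ENNReal.ofReal (limsup (fun n => f n x) atTop) =
      limsup (fun n => ENNReal.ofReal (f n x)) atTop :=
    ENNReal.ofReal_mono.map_limsup_of_continuousAt _ ENNReal.continuous_ofReal.continuousAt
      (isBoundedUnder_of ⟨C, fun n => (hfC n x).2⟩)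
      (isBoundedUnder_of ⟨0, fun n => (hfC n x).1⟩).isCoboundedUnder_le
  have hofReal_integral n : ENNReal.ofReal (∫ x, f n x ∂μ) = ∫⁻ x, ENNReal.ofReal (f n x) ∂μ :=
    ofReal_integral_eq_lintegral_ofReal (integrable_of_forall_mem_Icc (hf n) (hfC n))
      (.of_forall fun x => (hfC n x).1)
  have hlimsup : Measurable fun x => limsup (fun n => f n x) atTop := .limsup hf
  refine (ENNReal.ofReal_le_ofReal_iff (integral_nonneg fun x => (hlimsupC x).1)).1 ?_
  calc ENNReal.ofReal L
      = limsup (fun n => ENNReal.ofReal (∫ x, f n x ∂μ)) atTop :=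
        ((ENNReal.continuous_ofReal.tendsto L).comp hL).limsup_eq.symm
    _ = limsup (fun n => ∫⁻ x, ENNReal.ofReal (f n x) ∂μ) atTop := by simp only [hofReal_integral]
    _ ≤ ∫⁻ x, limsup (fun n => ENNReal.ofReal (f n x)) atTop ∂μ :=
        limsup_lintegral_le (fun _ => ENNReal.ofReal C) (fun n => (hf n).ennreal_ofReal)
          (fun n => .of_forall fun x => ENNReal.ofReal_le_ofReal (hfC n x).2)
          (by simp [lintegral_const, ENNReal.mul_ne_top, measure_ne_top])
    _ = ENNReal.ofReal (∫ x, limsup (fun n => f n x) atTop ∂μ) := by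
        simp only [← hofReal_limsup]
        exact (ofReal_integral_eq_lintegral_ofReal (integrable_of_forall_mem_Icc hlimsup hlimsupC)
          (.of_forall fun x => (hlimsupC x).1)).symm

lemma ae_le_of_forall_setIntegral_le_of_measurable [IsFiniteMeasure μ] {f g : X → ℝ}
    (hf : Measurable f) (hg : Integrable g μ)
    (hfg : ∀ s, MeasurableSet s → ∫ x in s, f x ∂μ ≤ ∫ x in s, g x ∂μ) : ∀ᵐ x ∂μ, f x ≤ g x := by
  -- `f` need not be integrable, so the set integrals are compared where `|f| ≤ M`.
  set T : ℕ → Set X := fun M => {x | |f x| ≤ M}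
  have hT M : MeasurableSet (T M) := measurableSet_le hf.abs measurable_const
  have hle_on M : ∀ᵐ x ∂μ.restrict (T M), f x ≤ g x := by
    refine ae_le_of_forall_setIntegral_le ?_ hg.restrict fun s hs _ => ?_
    · exact .of_bound hf.aestronglyMeasurable M (ae_restrict_of_forall_mem (hT M) fun x hx => hx)
    · simpa only [Measure.restrict_restrict hs] using hfg _ (hs.inter (hT M))
  have hcover : ⋃ M, T M = Set.univ :=
    Set.eq_univ_of_forall fun x => Set.mem_iUnion.2 (exists_nat_ge |f x|)
  rw [← Measure.restrict_univ (μ := μ), ← hcover, ae_restrict_iUnion_iff]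
  exact hle_on

end

/-- If `g_n` converges to `g` in the weak* sense against all integrable test functions,
with `0 ≤ g_n ≤ 1`, then `limsup_n g_n ≥ g` almost everywhere. -/
theorem stmt4 {X : Type*} [MeasurableSpace X] (μ : Measure X) [IsFiniteMeasure μ]
    (g : ℕ → X → ℝ) (glim : X → ℝ)
    (hmeas : ∀ n, Measurable (g n)) (hbdd : ∀ n x, g n x ∈ Set.Icc (0 : ℝ) 1)
    (hglim : Measurable glim)
    (hconv : ∀ q : X → ℝ, Integrable q μ →
      Tendsto (fun n => ∫ x, g n x * q x ∂μ) atTop (nhds (∫ x, glim x * q x ∂μ))) :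
    ∀ᵐ x ∂μ, glim x ≤ limsup (fun n => g n x) atTop := by
  have hsetIntegral_le s (hs : MeasurableSet s) :
      ∫ x in s, glim x ∂μ ≤ ∫ x in s, limsup (fun n => g n x) atTop ∂μ := by
    have htest := hconv (s.indicator 1) ((integrable_const 1).indicator hs)
    simp only [← Set.indicator_mul_right, Pi.one_apply, mul_one, integral_indicator hs] at htest
    exact le_integral_limsup_of_tendsto hmeas hbdd htest
  exact ae_le_of_forall_setIntegral_le_of_measurable hglim
    (integrable_of_forall_mem_Icc (.limsup hmeas) fun x => limsup_mem_Icc_of_forall_mem (hbdd · x))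
    hsetIntegral_le
end

section
/- Let X = {x₁, x₂} sit inside a metric space, K = 2, μ₁ = ½δ_{x₁}, μ₂ = ½δ_{x₂}, and ε₀ = ½ d(x₁,x₂) with x₁ ≠ x₂. Then the open-ball adversarial risk R^o_{ε₀} := inf_f Σ_{i=1,2} ∫ sup_{x̃∈B_{ε₀}(x)} (1 − f_i(x̃)) dμ_i(x) over Borel measurable f : X → Δ₂ (f₁,f₂ ≥ 0, f₁ + f₂ ≤ 1) equals 0, while the closed-ball adversarial risk R̄_{ε₀} := inf_f Σ_{i=1,2} ∫ sup_{x̃∈B̄_{ε₀}(x)} (1 − f_i(x̃)) dμ_i(x) equals ½. -/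
open MeasureTheory ENNReal Metric Set

/-! With `ε₀ = d(x₁,x₂)/2` the open balls around `x₁` and `x₂` are disjoint, so the classifier
that predicts class `i` exactly on the ball around `xᵢ` suffers no loss. The closed balls share the
midpoint `m`, and whatever `f` does there, the two worst-case losses add up to at least
`(1 - f₀ m) + (1 - f₁ m) ≥ 1`; the constant classifier `(1, 0)` attains the resulting bound `½`. -/

variable {α : Type*}

noncomputable def worstCaseLoss (g : α → ℝ) (s : Set α) : ℝ :=
  sSup ((fun y => 1 - g y) '' s)

lemma ofReal_worstCaseLoss_eq_zero {g : α → ℝ} {s : Set α} (hg : ∀ y ∈ s, 1 ≤ g y) :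
    ENNReal.ofReal (worstCaseLoss g s) = 0 :=
  ofReal_eq_zero.2 <| Real.sSup_nonpos <| by
    rintro _ ⟨y, hy, rfl⟩
    linarith [hg y hy]

lemma worstCaseLoss_le_one {g : α → ℝ} (hg : ∀ y, 0 ≤ g y) (s : Set α) :
    worstCaseLoss g s ≤ 1 :=
  Real.sSup_le (by rintro _ ⟨y, -, rfl⟩; linarith [hg y]) zero_le_one

lemma sub_le_worstCaseLoss {g : α → ℝ} (hg : ∀ y, 0 ≤ g y) {s : Set α} {m : α} (hm : m ∈ s) :
    1 - g m ≤ worstCaseLoss g s :=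
  le_csSup ⟨1, by rintro _ ⟨y, -, rfl⟩; linarith [hg y]⟩ ⟨m, hm, rfl⟩

variable [MeasurableSpace α]

def softClassifiers : Set (Fin 2 → α → ℝ) :=
  {f | (∀ i, Measurable (f i)) ∧ (∀ i x, 0 ≤ f i x) ∧ ∀ x, f 0 x + f 1 x ≤ 1}

noncomputable def adversarialRisk (B : α → Set α) (μ₁ μ₂ : Measure α) (f : Fin 2 → α → ℝ) :
    ℝ≥0∞ :=
  ∫⁻ x, ENNReal.ofReal (worstCaseLoss (f 0) (B x)) ∂μ₁ +
    ∫⁻ x, ENNReal.ofReal (worstCaseLoss (f 1) (B x)) ∂μ₂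

lemma le_one_of_mem_softClassifiers {f : Fin 2 → α → ℝ} (hf : f ∈ softClassifiers) (i : Fin 2)
    (x : α) : f i x ≤ 1 := by
  obtain ⟨-, hf0, hsum⟩ := hf
  have := hsum x
  fin_cases i <;> simp only [Fin.zero_eta, Fin.mk_one] <;> linarith [hf0 0 x, hf0 1 x]

lemma indicator_pair_mem_softClassifiers {s t : Set α} (hs : MeasurableSet s)
    (ht : MeasurableSet t) (hst : Disjoint s t) :
    ![s.indicator 1, t.indicator 1] ∈ (softClassifiers : Set (Fin 2 → α → ℝ)) := by
  refine ⟨fun i => ?_, fun i x => ?_, fun x => ?_⟩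
  · fin_cases i
    exacts [measurable_const.indicator hs, measurable_const.indicator ht]
  · fin_cases i <;> exact indicator_nonneg (fun _ _ => zero_le_one (α := ℝ)) x
  · simpa [indicator_union_of_disjoint hst] using
      indicator_le_self' (s := s ∪ t) (f := (1 : α → ℝ)) (fun _ _ => zero_le_one) x

lemma const_pair_mem_softClassifiers : ![1, 0] ∈ (softClassifiers : Set (Fin 2 → α → ℝ)) := by
  refine ⟨fun i => ?_, fun i x => ?_, fun x => ?_⟩
  · fin_cases i <;> exact measurable_const
  · fin_cases i <;> simp
  · simp

variable [MeasurableSingletonClass α] {B : α → Set α} {x₁ x₂ : α}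

lemma adversarialRisk_half_dirac (f : Fin 2 → α → ℝ) :
    adversarialRisk B ((1 / 2 : ℝ≥0∞) • Measure.dirac x₁) ((1 / 2 : ℝ≥0∞) • Measure.dirac x₂) f =
      1 / 2 * (ENNReal.ofReal (worstCaseLoss (f 0) (B x₁)) +
        ENNReal.ofReal (worstCaseLoss (f 1) (B x₂))) := by
  simp only [adversarialRisk, lintegral_smul_measure, lintegral_dirac, smul_eq_mul, mul_add]

lemma iInf_adversarialRisk_eq_zero_of_disjoint (h₁ : MeasurableSet (B x₁))
    (h₂ : MeasurableSet (B x₂)) (hB : Disjoint (B x₁) (B x₂)) :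
    ⨅ f ∈ softClassifiers, adversarialRisk B ((1 / 2 : ℝ≥0∞) • Measure.dirac x₁)
      ((1 / 2 : ℝ≥0∞) • Measure.dirac x₂) f = 0 := by
  refine nonpos_iff_eq_zero.1 <|
    (iInf₂_le _ (indicator_pair_mem_softClassifiers h₁ h₂ hB)).trans_eq ?_
  have hloss : ∀ s : Set α, ENNReal.ofReal (worstCaseLoss (s.indicator 1) s) = 0 := fun s =>
    ofReal_worstCaseLoss_eq_zero fun y hy => (indicator_of_mem hy (1 : α → ℝ)).ge
  rw [adversarialRisk_half_dirac]
  simp [hloss]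

lemma iInf_adversarialRisk_le_half :
    ⨅ f ∈ softClassifiers, adversarialRisk B ((1 / 2 : ℝ≥0∞) • Measure.dirac x₁)
      ((1 / 2 : ℝ≥0∞) • Measure.dirac x₂) f ≤ 1 / 2 := by
  refine (iInf₂_le _ const_pair_mem_softClassifiers).trans ?_
  rw [adversarialRisk_half_dirac, ofReal_worstCaseLoss_eq_zero (by simp), zero_add]
  exact mul_le_of_le_one_right' <| ofReal_le_one.2 <| worstCaseLoss_le_one (fun _ => le_rfl) _

lemma half_le_adversarialRisk {m : α} (hm : m ∈ B x₁ ∩ B x₂) {f : Fin 2 → α → ℝ}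
    (hf : f ∈ softClassifiers) :
    1 / 2 ≤ adversarialRisk B ((1 / 2 : ℝ≥0∞) • Measure.dirac x₁)
      ((1 / 2 : ℝ≥0∞) • Measure.dirac x₂) f := by
  have hL₀ := sub_le_worstCaseLoss (hf.2.1 0) hm.1
  have hL₁ := sub_le_worstCaseLoss (hf.2.1 1) hm.2
  have hL₀_nonneg : 0 ≤ worstCaseLoss (f 0) (B x₁) := by
    linarith [le_one_of_mem_softClassifiers hf 0 m]
  have hL₁_nonneg : 0 ≤ worstCaseLoss (f 1) (B x₂) := by
    linarith [le_one_of_mem_softClassifiers hf 1 m]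
  have hsum : 1 ≤ worstCaseLoss (f 0) (B x₁) + worstCaseLoss (f 1) (B x₂) := by
    linarith [hf.2.2 m]
  rw [adversarialRisk_half_dirac, ← ofReal_add hL₀_nonneg hL₁_nonneg]
  exact le_mul_of_one_le_right' (ofReal_one ▸ ofReal_le_ofReal hsum)

lemma iInf_adversarialRisk_eq_half_of_mem_inter {m : α} (hm : m ∈ B x₁ ∩ B x₂) :
    ⨅ f ∈ softClassifiers, adversarialRisk B ((1 / 2 : ℝ≥0∞) • Measure.dirac x₁)
      ((1 / 2 : ℝ≥0∞) • Measure.dirac x₂) f = 1 / 2 :=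
  iInf_adversarialRisk_le_half.antisymm <| le_iInf₂ fun _ hf => half_le_adversarialRisk hm hf

lemma ball_disjoint_ball_half_dist {X : Type*} [PseudoMetricSpace X] (x₁ x₂ : X) :
    Disjoint (ball x₁ (dist x₁ x₂ / 2)) (ball x₂ (dist x₁ x₂ / 2)) :=
  ball_disjoint_ball (by linarith)

lemma midpoint_mem_closedBall_inter {E : Type*} [NormedAddCommGroup E] [NormedSpace ℝ E]
    (x₁ x₂ : E) :
    midpoint ℝ x₁ x₂ ∈ closedBall x₁ (dist x₁ x₂ / 2) ∩ closedBall x₂ (dist x₁ x₂ / 2) := by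
  simp only [mem_inter_iff, mem_closedBall, dist_midpoint_left, dist_midpoint_right,
    Real.norm_two]
  constructor <;> linarith

theorem stmt9_general (x₁ x₂ : ℝ) (ε₀ : ℝ) (hε₀ : ε₀ = dist x₁ x₂ / 2)
    (μ₁ μ₂ : Measure ℝ)
    (hμ₁ : μ₁ = (1 / 2 : ℝ≥0∞) • Measure.dirac x₁)
    (hμ₂ : μ₂ = (1 / 2 : ℝ≥0∞) • Measure.dirac x₂) :
    (⨅ f ∈ {f : Fin 2 → ℝ → ℝ |
        (∀ i, Measurable (f i)) ∧ (∀ i x, 0 ≤ f i x) ∧ ∀ x, f 0 x + f 1 x ≤ 1},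
      (∫⁻ x, ENNReal.ofReal (sSup ((fun y => 1 - f 0 y) '' Metric.ball x ε₀)) ∂μ₁ +
       ∫⁻ x, ENNReal.ofReal (sSup ((fun y => 1 - f 1 y) '' Metric.ball x ε₀)) ∂μ₂)) = 0 ∧
    (⨅ f ∈ {f : Fin 2 → ℝ → ℝ |
        (∀ i, Measurable (f i)) ∧ (∀ i x, 0 ≤ f i x) ∧ ∀ x, f 0 x + f 1 x ≤ 1},
      (∫⁻ x, ENNReal.ofReal (sSup ((fun y => 1 - f 0 y) '' Metric.closedBall x ε₀)) ∂μ₁ +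
       ∫⁻ x, ENNReal.ofReal (sSup ((fun y => 1 - f 1 y) '' Metric.closedBall x ε₀)) ∂μ₂))
      = 1 / 2 := by
  subst hε₀ hμ₁ hμ₂
  exact ⟨iInf_adversarialRisk_eq_zero_of_disjoint (B := (ball · _)) isOpen_ball.measurableSet
      isOpen_ball.measurableSet (ball_disjoint_ball_half_dist x₁ x₂),
    iInf_adversarialRisk_eq_half_of_mem_inter (B := (closedBall · _))
      (midpoint_mem_closedBall_inter x₁ x₂)⟩

/-- Two-point example on `ℝ`: with `μ₁ = ½δ_{x₁}`, `μ₂ = ½δ_{x₂}` and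
`ε₀ = d(x₁,x₂)/2`, the open-ball adversarial risk is `0` while the
closed-ball adversarial risk is `1/2`. -/
theorem stmt9 (x₁ x₂ : ℝ) (hne : x₁ ≠ x₂) (ε₀ : ℝ) (hε₀ : ε₀ = dist x₁ x₂ / 2)
    (μ₁ μ₂ : Measure ℝ)
    (hμ₁ : μ₁ = (1 / 2 : ℝ≥0∞) • Measure.dirac x₁)
    (hμ₂ : μ₂ = (1 / 2 : ℝ≥0∞) • Measure.dirac x₂) :
    (⨅ f ∈ {f : Fin 2 → ℝ → ℝ |
        (∀ i, Measurable (f i)) ∧ (∀ i x, 0 ≤ f i x) ∧ ∀ x, f 0 x + f 1 x ≤ 1},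
      (∫⁻ x, ENNReal.ofReal (sSup ((fun y => 1 - f 0 y) '' Metric.ball x ε₀)) ∂μ₁ +
       ∫⁻ x, ENNReal.ofReal (sSup ((fun y => 1 - f 1 y) '' Metric.ball x ε₀)) ∂μ₂)) = 0 ∧
    (⨅ f ∈ {f : Fin 2 → ℝ → ℝ |
        (∀ i, Measurable (f i)) ∧ (∀ i x, 0 ≤ f i x) ∧ ∀ x, f 0 x + f 1 x ≤ 1},
      (∫⁻ x, ENNReal.ofReal (sSup ((fun y => 1 - f 0 y) '' Metric.closedBall x ε₀)) ∂μ₁ +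
       ∫⁻ x, ENNReal.ofReal (sSup ((fun y => 1 - f 1 y) '' Metric.closedBall x ε₀)) ∂μ₂))
      = 1 / 2 :=
  stmt9_general x₁ x₂ ε₀ hε₀ μ₁ μ₂ hμ₁ hμ₂
end

section
/- Let X be a metric space, f₁ : X → [0,1] a Borel measurable function, and for a Borel set A ⊆ X and ε ≥ 0 define Φ(A) := ∫ sup_{x̃∈B̄_ε(x)} 1_{A^c}(x̃) dμ̄₁(x) + ∫ sup_{x̃∈B̄_ε(x)} 1_A(x̃) dμ̄₂(x), where μ̄₁, μ̄₂ are finite universally-complete measures. Then the closed-ball adversarial risk of the soft classifier (f₁, 1−f₁) satisfies the coarea-type formula: ∫ sup_{x̃∈B̄_ε(x)} (1−f₁(x̃)) dμ̄₁(x) + ∫ sup_{x̃∈B̄_ε(x)} f₁(x̃) dμ̄₂(x) = ∫₀¹ Φ({f₁ ≥ t}) dt. -/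
/-!
For fixed `x`, the function `t ↦ sup_{B̄_ε(x)} 1_{f₁ ≥ t}` is the indicator of
`(-∞, sup_{B̄_ε(x)} f₁]` up to the endpoint, and `t ↦ sup_{B̄_ε(x)} 1_{f₁ < 1 - t}` is the same
for `1 - f₁`; so integrating over `t ∈ [0, 1]` (after `t ↦ 1 - t` in the first term of `Φ`)
recovers the two ball suprema. These need not be measurable in `x`, so `∫⁻` is a lower integral
and Tonelli is not available. The exchange of integrals is done by hand: `≥` through a measurable
minorant with the same lower integral and the layer-cake formula, `≤` through upper Riemann sums
of the antitone function `t ↦ ∫⁻ x, F x t ∂μ`, using that the lower integral is superadditive.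
-/

open MeasureTheory ENNReal Set Filter Topology

theorem sum_lintegral_le_lintegral_sum {X ι : Type*} [MeasurableSpace X] {μ : Measure X}
    (s : Finset ι) (f : ι → X → ℝ≥0∞) :
    ∑ i ∈ s, ∫⁻ x, f i x ∂μ ≤ ∫⁻ x, ∑ i ∈ s, f i x ∂μ := by
  classical
  induction s using Finset.induction_on with
  | empty => simp
  | insert i s hi ih =>
    simp_rw [Finset.sum_insert hi]
    exact (add_le_add le_rfl ih).trans (le_lintegral_add _ _)

theorem Antitone.setLIntegral_Ioc_le_sum {ψ : ℝ → ℝ≥0∞} (hψ : Antitone ψ) (a : ℝ) {h : ℝ}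
    (hh : 0 ≤ h) (n : ℕ) :
    ∫⁻ t in Ioc a (a + n * h), ψ t ≤ ∑ k ∈ Finset.range n, ENNReal.ofReal h * ψ (a + k * h) := by
  induction n with
  | zero => simp
  | succ n ih =>
    have hcell : ∫⁻ t in Ioc (a + n * h) (a + (n + 1 : ℕ) * h), ψ t ≤
        ENNReal.ofReal h * ψ (a + n * h) := by
      calc ∫⁻ t in Ioc (a + n * h) (a + (n + 1 : ℕ) * h), ψ t
          ≤ ∫⁻ _ in Ioc (a + n * h) (a + (n + 1 : ℕ) * h), ψ (a + n * h) :=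
            setLIntegral_mono' measurableSet_Ioc fun t ht => hψ ht.1.le
        _ = ENNReal.ofReal h * ψ (a + n * h) := by
            rw [setLIntegral_const, Real.volume_Ioc, mul_comm]
            push_cast
            ring_nf
    have hunion : Ioc a (a + (n + 1 : ℕ) * h) =
        Ioc a (a + n * h) ∪ Ioc (a + n * h) (a + (n + 1 : ℕ) * h) :=
      (Ioc_union_Ioc_eq_Ioc (by nlinarith [n.cast_nonneg (α := ℝ)])
        (by push_cast; nlinarith)).symm
    rw [hunion, Finset.sum_range_succ]
    exact (lintegral_union_le _ _ _).trans (add_le_add ih hcell)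

theorem setLIntegral_Icc_comp_add_sub (w : ℝ → ℝ≥0∞) (a b : ℝ) :
    ∫⁻ t in Icc a b, w (a + b - t) = ∫⁻ t in Icc a b, w t := by
  have hpre : (fun t => a + b - t) ⁻¹' Icc a b = Icc a b := by
    rw [preimage_const_sub_Icc]; congr 1 <;> ring
  simpa only [hpre] using
    (Measure.measurePreserving_sub_left volume (a + b)).setLIntegral_comp_preimage_emb
      (MeasurableEquiv.subLeft (a + b)).measurableEmbedding w (Icc a b)

/-- `φ` is the indicator of `(-∞, m]` except at the endpoint `m`, where it may take any value
in `[0, 1]`. -/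
structure IsStepDownAt (φ : ℝ → ℝ≥0∞) (m : ℝ) : Prop where
  le_one : ∀ t, φ t ≤ 1
  eq_one : ∀ t < m, φ t = 1
  eq_zero : ∀ t, m < t → φ t = 0

namespace IsStepDownAt

variable {φ : ℝ → ℝ≥0∞} {m : ℝ}

theorem antitone (hφ : IsStepDownAt φ m) : Antitone φ := by
  intro s t hst
  rcases lt_or_ge s m with hs | hs
  · exact (hφ.eq_one s hs).symm ▸ hφ.le_one t
  · rcases hs.eq_or_lt with rfl | hs
    · rcases hst.eq_or_lt with rfl | ht
      · exact le_rfl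
      · simp [hφ.eq_zero t ht]
    · simp [hφ.eq_zero t (hs.trans_le hst)]

theorem sum_le (hφ : IsStepDownAt φ m) (N : ℕ) :
    ∑ k ∈ Finset.range N, φ ((k + 1) / N) ≤ ENNReal.ofReal (N * m) := by
  classical
  calc ∑ k ∈ Finset.range N, φ ((k + 1) / N)
      ≤ ∑ k ∈ Finset.range N, if k < ⌊N * m⌋₊ then 1 else 0 := by
        refine Finset.sum_le_sum fun k hk => ?_
        have hN : (0 : ℝ) < N := by exact_mod_cast (Finset.mem_range.1 hk).trans_le' k.zero_le
        split_ifs with hkm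
        · exact hφ.le_one _
        · refine (hφ.eq_zero _ ?_).le
          have hfloor : (⌊N * m⌋₊ : ℝ) ≤ k := by exact_mod_cast not_lt.1 hkm
          rw [lt_div_iff₀ hN]
          linarith [Nat.lt_floor_add_one ((N : ℝ) * m)]
    _ ≤ ⌊N * m⌋₊ := by
        rw [Finset.sum_boole]
        exact_mod_cast (Finset.card_le_card (by intro k; simp)).trans_eq (Finset.card_range _)
    _ ≤ ENNReal.ofReal (N * m) := by
        rcases le_or_gt 0 (N * m) with h | h
        · exact (ofReal_natCast _).symm.trans_le (ofReal_le_ofReal (Nat.floor_le h))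
        · simp [Nat.floor_eq_zero.2 (h.trans one_pos)]

end IsStepDownAt

theorem isStepDownAt_sSup_indicator {X : Type*} {s : Set X} {g : X → ℝ} {A : ℝ → Set X}
    (hs : s.Nonempty) (hg : BddAbove (g '' s))
    (hA : ∀ t, {y | t < g y} ⊆ A t ∧ A t ⊆ {y | t ≤ g y}) :
    IsStepDownAt (fun t => sSup ((A t).indicator (fun _ => (1 : ℝ≥0∞)) '' s)) (sSup (g '' s)) := by
  have hle : ∀ t, sSup ((A t).indicator (fun _ => (1 : ℝ≥0∞)) '' s) ≤ 1 := fun t =>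
    sSup_le <| by rintro _ ⟨y, -, rfl⟩; exact indicator_le (fun _ _ => le_rfl) y
  refine ⟨hle, fun t ht => ?_, fun t ht => ?_⟩
  · obtain ⟨_, ⟨y, hy, rfl⟩, hty⟩ := exists_lt_of_lt_csSup (hs.image g) ht
    exact (hle t).antisymm (le_sSup ⟨y, hy, indicator_of_mem ((hA t).1 hty) _⟩)
  · refine nonpos_iff_eq_zero.1 (sSup_le ?_)
    rintro _ ⟨y, hy, rfl⟩
    refine (indicator_of_notMem (fun hyA => ?_) _).le
    exact (le_csSup hg (mem_image_of_mem g hy)).not_gt (ht.trans_le ((hA t).2 hyA))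

section LayerCake

variable {X : Type*} [MeasurableSpace X] {μ : Measure X} {F : X → ℝ → ℝ≥0∞} {M : X → ℝ}

theorem antitone_lintegral_of_isStepDownAt (hF : ∀ x, IsStepDownAt (F x) (M x)) :
    Antitone fun t => ∫⁻ x, F x t ∂μ :=
  fun _ _ hst => lintegral_mono fun x => (hF x).antitone hst

theorem lintegral_ofReal_le_setLIntegral_lintegral (hF : ∀ x, IsStepDownAt (F x) (M x))
    (hM : ∀ x, M x ≤ 1) :
    ∫⁻ x, ENNReal.ofReal (M x) ∂μ ≤ ∫⁻ t in Icc 0 1, ∫⁻ x, F x t ∂μ := by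
  obtain ⟨g, hg_meas, hg_le, hg_eq⟩ :=
    exists_measurable_le_lintegral_eq μ fun x => ENNReal.ofReal (M x)
  have hg_ne_top : ∀ x, g x ≠ ∞ := fun x => ne_top_of_le_ne_top ofReal_ne_top (hg_le x)
  have hlt_M : ∀ x, ∀ t, 0 ≤ t → t < (g x).toReal → t < M x := fun x t ht htg =>
    (ofReal_lt_ofReal_iff'.1 (((ofReal_lt_iff_lt_toReal ht (hg_ne_top x)).2 htg).trans_le
      (hg_le x))).1
  have hlevel : ∀ t ∈ Ioi (0 : ℝ),
      μ {x | t < (g x).toReal} ≤ (Icc 0 1).indicator (fun t => ∫⁻ x, F x t ∂μ) t := by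
    intro t ht
    rcases le_or_gt t 1 with ht1 | ht1
    · rw [indicator_of_mem (show t ∈ Icc 0 1 from ⟨le_of_lt ht, ht1⟩),
        ← lintegral_indicator_one (measurableSet_lt measurable_const hg_meas.ennreal_toReal)]
      refine lintegral_mono fun x => indicator_le (g := fun x => F x t) (fun x hx => ?_) x
      exact ((hF x).eq_one t (hlt_M x t (le_of_lt ht) hx)).ge
    · have : {x | t < (g x).toReal} = ∅ :=
        eq_empty_of_forall_notMem fun x hx =>
          lt_asymm ((hlt_M x t (le_of_lt ht) hx).trans_le (hM x)) ht1
      simp [this]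
  calc ∫⁻ x, ENNReal.ofReal (M x) ∂μ = ∫⁻ x, ENNReal.ofReal (g x).toReal ∂μ := by
        rw [hg_eq]; exact lintegral_congr fun x => (ofReal_toReal (hg_ne_top x)).symm
    _ = ∫⁻ t in Ioi 0, μ {x | t < (g x).toReal} :=
        lintegral_eq_lintegral_meas_lt μ (ae_of_all _ fun _ => toReal_nonneg)
          hg_meas.ennreal_toReal.aemeasurable
    _ ≤ ∫⁻ t in Ioi 0, (Icc 0 1).indicator (fun t => ∫⁻ x, F x t ∂μ) t :=
        setLIntegral_mono' measurableSet_Ioi hlevel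
    _ ≤ ∫⁻ t, (Icc 0 1).indicator (fun t => ∫⁻ x, F x t ∂μ) t := setLIntegral_le_lintegral _ _
    _ = ∫⁻ t in Icc 0 1, ∫⁻ x, F x t ∂μ := lintegral_indicator measurableSet_Icc _

theorem setLIntegral_lintegral_le_lintegral_ofReal [IsFiniteMeasure μ]
    (hF : ∀ x, IsStepDownAt (F x) (M x)) :
    ∫⁻ t in Icc 0 1, ∫⁻ x, F x t ∂μ ≤ ∫⁻ x, ENNReal.ofReal (M x) ∂μ := by
  set ψ := fun t => ∫⁻ x, F x t ∂μ
  have hψ : Antitone ψ := antitone_lintegral_of_isStepDownAt hF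
  have hriemann : ∀ N : ℕ, 1 ≤ N → ∫⁻ t in Icc 0 1, ψ t ≤
      (N : ℝ≥0∞)⁻¹ * μ univ + ∫⁻ x, ENNReal.ofReal (M x) ∂μ := by
    intro N hN
    have hN0 : (0 : ℝ) < N := by exact_mod_cast hN
    have hinv : ENNReal.ofReal (N : ℝ)⁻¹ = (N : ℝ≥0∞)⁻¹ := by
      rw [ofReal_inv_of_pos hN0, ofReal_natCast]
    have hupper : ∫⁻ t in Ioc 0 1, ψ t ≤ (N : ℝ≥0∞)⁻¹ * ∑ k ∈ Finset.range N, ψ (k / N) := by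
      simpa [Finset.mul_sum, hinv, div_eq_mul_inv, hN0.ne'] using
        hψ.setLIntegral_Ioc_le_sum 0 (one_div_nonneg.2 hN0.le) N
    have hshift : ∑ k ∈ Finset.range N, ψ (k / N) ≤
        μ univ + ∑ k ∈ Finset.range N, ψ ((k + 1) / N) :=
      calc ∑ k ∈ Finset.range N, ψ (k / N) ≤ ∑ k ∈ Finset.range (N + 1), ψ (k / N) :=
            Finset.sum_le_sum_of_subset (Finset.range_subset_range.2 N.le_succ)
        _ = ψ 0 + ∑ k ∈ Finset.range N, ψ ((k + 1) / N) := by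
            rw [Finset.sum_range_succ']; push_cast; simp [add_comm]
        _ ≤ μ univ + ∑ k ∈ Finset.range N, ψ ((k + 1) / N) := by
            gcongr
            exact (lintegral_mono fun x => (hF x).le_one 0).trans_eq (lintegral_one)
    have hsum : ∑ k ∈ Finset.range N, ψ ((k + 1) / N) ≤ N * ∫⁻ x, ENNReal.ofReal (M x) ∂μ :=
      calc ∑ k ∈ Finset.range N, ψ ((k + 1) / N)
          ≤ ∫⁻ x, ∑ k ∈ Finset.range N, F x ((k + 1) / N) ∂μ :=
            sum_lintegral_le_lintegral_sum _ _
        _ ≤ ∫⁻ x, ENNReal.ofReal (N * M x) ∂μ := lintegral_mono fun x => (hF x).sum_le N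
        _ = N * ∫⁻ x, ENNReal.ofReal (M x) ∂μ := by
            simp_rw [ofReal_mul hN0.le, ofReal_natCast]
            exact lintegral_const_mul' _ _ (natCast_ne_top N)
    calc ∫⁻ t in Icc 0 1, ψ t = ∫⁻ t in Ioc 0 1, ψ t := by
          rw [Measure.restrict_congr_set Ioc_ae_eq_Icc]
      _ ≤ (N : ℝ≥0∞)⁻¹ * (μ univ + N * ∫⁻ x, ENNReal.ofReal (M x) ∂μ) :=
          hupper.trans (by gcongr; exact hshift.trans (by gcongr))
      _ = (N : ℝ≥0∞)⁻¹ * μ univ + ∫⁻ x, ENNReal.ofReal (M x) ∂μ := by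
          rw [mul_add, ← mul_assoc, ENNReal.inv_mul_cancel (by simp; omega) (natCast_ne_top N),
            one_mul]
  have hlim : Tendsto (fun N : ℕ => (N : ℝ≥0∞)⁻¹ * μ univ + ∫⁻ x, ENNReal.ofReal (M x) ∂μ)
      atTop (𝓝 (∫⁻ x, ENNReal.ofReal (M x) ∂μ)) := by
    simpa using (ENNReal.Tendsto.mul_const ENNReal.tendsto_inv_nat_nhds_zero
      (Or.inr (measure_ne_top μ univ))).add_const (∫⁻ x, ENNReal.ofReal (M x) ∂μ)
  exact ge_of_tendsto hlim (eventually_atTop.2 ⟨1, hriemann⟩)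

theorem setLIntegral_lintegral_eq_lintegral_ofReal [IsFiniteMeasure μ]
    (hF : ∀ x, IsStepDownAt (F x) (M x)) (hM : ∀ x, M x ≤ 1) :
    ∫⁻ t in Icc 0 1, ∫⁻ x, F x t ∂μ = ∫⁻ x, ENNReal.ofReal (M x) ∂μ :=
  le_antisymm (setLIntegral_lintegral_le_lintegral_ofReal hF)
    (lintegral_ofReal_le_setLIntegral_lintegral hF hM)

end LayerCake

theorem stmt12_general {X : Type*} [MetricSpace X] [MeasurableSpace X]
    (f₁ : X → ℝ) (hf : ∀ x, f₁ x ∈ Set.Icc (0 : ℝ) 1)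
    (ε : ℝ) (hε : 0 ≤ ε)
    (μ₁ μ₂ : Measure X) [IsFiniteMeasure μ₁] [IsFiniteMeasure μ₂]
    (Φ : Set X → ℝ≥0∞)
    (hΦ : ∀ A : Set X, Φ A =
      ∫⁻ x, sSup ((Set.indicator Aᶜ fun _ => (1 : ℝ≥0∞)) '' Metric.closedBall x ε) ∂μ₁ +
      ∫⁻ x, sSup ((Set.indicator A fun _ => (1 : ℝ≥0∞)) '' Metric.closedBall x ε) ∂μ₂) :
    ∫⁻ x, ENNReal.ofReal (sSup ((fun y => 1 - f₁ y) '' Metric.closedBall x ε)) ∂μ₁ +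
      ∫⁻ x, ENNReal.ofReal (sSup ((fun y => f₁ y) '' Metric.closedBall x ε)) ∂μ₂ =
    ∫⁻ t in Set.Icc (0 : ℝ) 1, Φ {x : X | t ≤ f₁ x} := by
  have hball : ∀ x : X, (Metric.closedBall x ε).Nonempty := fun x =>
    ⟨x, Metric.mem_closedBall_self hε⟩
  have hsup_le_one : ∀ g : X → ℝ, (∀ y, g y ≤ 1) →
      ∀ x, BddAbove (g '' Metric.closedBall x ε) ∧ sSup (g '' Metric.closedBall x ε) ≤ 1 :=
    fun g hg x => ⟨⟨1, by rintro _ ⟨y, -, rfl⟩; exact hg y⟩,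
      csSup_le ((hball x).image g) (by rintro _ ⟨y, -, rfl⟩; exact hg y)⟩
  have hsup₁ := hsup_le_one (fun y => 1 - f₁ y) fun y => by linarith [(hf y).1]
  have hsup₂ := hsup_le_one f₁ fun y => (hf y).2
  have hstep₁ : ∀ x, IsStepDownAt
      (fun t => sSup ({y | 1 - t ≤ f₁ y}ᶜ.indicator (fun _ => (1 : ℝ≥0∞)) '' Metric.closedBall x ε))
      (sSup ((fun y => 1 - f₁ y) '' Metric.closedBall x ε)) := fun x =>
    isStepDownAt_sSup_indicator (hball x) (hsup₁ x).1 fun t =>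
      ⟨fun y (hy : t < 1 - f₁ y) => show ¬1 - t ≤ f₁ y by linarith,
        fun y (hy : ¬1 - t ≤ f₁ y) => show t ≤ 1 - f₁ y by linarith [not_le.1 hy]⟩
  have hstep₂ : ∀ x, IsStepDownAt
      (fun t => sSup ({y | t ≤ f₁ y}.indicator (fun _ => (1 : ℝ≥0∞)) '' Metric.closedBall x ε))
      (sSup (f₁ '' Metric.closedBall x ε)) := fun x =>
    isStepDownAt_sSup_indicator (hball x) (hsup₂ x).1 fun t =>
      ⟨fun y (hy : t < f₁ y) => show t ≤ f₁ y from hy.le, subset_rfl⟩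
  have hreflect := setLIntegral_Icc_comp_add_sub (fun t => ∫⁻ x,
    sSup ({y | t ≤ f₁ y}ᶜ.indicator (fun _ => (1 : ℝ≥0∞)) '' Metric.closedBall x ε) ∂μ₁) 0 1
  simp only [zero_add] at hreflect
  rw [← setLIntegral_lintegral_eq_lintegral_ofReal hstep₁ fun x => (hsup₁ x).2,
    ← setLIntegral_lintegral_eq_lintegral_ofReal hstep₂ fun x => (hsup₂ x).2, hreflect,
    ← lintegral_add_right _ (antitone_lintegral_of_isStepDownAt hstep₂).measurable]
  simp_rw [hΦ]

/-- Coarea-type formula for the closed-ball adversarial risk of a binary soft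
classifier `(f₁, 1 - f₁)`: it equals the integral over `t ∈ [0,1]` of the risk of
the hard classifier given by the superlevel set `{f₁ ≥ t}`. -/
theorem stmt12 {X : Type*} [MetricSpace X] [MeasurableSpace X] [BorelSpace X]
    (f₁ : X → ℝ) (hmeas : Measurable f₁) (hf : ∀ x, f₁ x ∈ Set.Icc (0 : ℝ) 1)
    (ε : ℝ) (hε : 0 ≤ ε)
    (μ₁ μ₂ : Measure X) [IsFiniteMeasure μ₁] [IsFiniteMeasure μ₂]
    (Φ : Set X → ℝ≥0∞)
    (hΦ : ∀ A : Set X, Φ A =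
      ∫⁻ x, sSup ((Set.indicator Aᶜ fun _ => (1 : ℝ≥0∞)) '' Metric.closedBall x ε) ∂μ₁ +
      ∫⁻ x, sSup ((Set.indicator A fun _ => (1 : ℝ≥0∞)) '' Metric.closedBall x ε) ∂μ₂) :
    ∫⁻ x, ENNReal.ofReal (sSup ((fun y => 1 - f₁ y) '' Metric.closedBall x ε)) ∂μ₁ +
      ∫⁻ x, ENNReal.ofReal (sSup ((fun y => f₁ y) '' Metric.closedBall x ε)) ∂μ₂ =
    ∫⁻ t in Set.Icc (0 : ℝ) 1, Φ {x : X | t ≤ f₁ x} :=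
  stmt12_general f₁ hf ε hε μ₁ μ₂ Φ hΦ
end

section
/- Let X be a set, K ∈ ℕ, A a nonempty subset of {1,…,K}, c : X × X → [0,∞], and define c_A((x_i)_{i∈A}) := inf_{x'∈X} Σ_{i∈A} c(x', x_i). Let f = (f₁,…,f_K) : X → [0,1]^K satisfy Σ_{i=1}^K f_i(x̃) ≤ 1 for all x̃ ∈ X. Define g_i(x) := inf_{x̃∈X} { f_i(x̃) + c(x, x̃) }. Then for every tuple (x_i)_{i∈A}: Σ_{i∈A} g_i(x_i) ≤ 1 + c_A((x_i)_{i∈A}). -/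
open ENNReal

/-
Fix a common point `y`. Taking `x̃ = y` in each infimum defining `gᵢ(xᵢ)` gives
`Σ_{i∈A} gᵢ(xᵢ) ≤ Σ_{i∈A} fᵢ(y) + Σ_{i∈A} c(y, xᵢ)` (by symmetry of `c`), and the first sum is at most
`Σᵢ fᵢ(y) ≤ 1` because the `fᵢ` are nonnegative. Minimising over `y` gives the claim.
-/

theorem Finset.sum_iInf_le_iInf_sum {ι α M : Type*} [AddCommMonoid M] [CompleteLattice M]
    [IsOrderedAddMonoid M] (s : Finset ι) (F : ι → α → M) :
    ∑ i ∈ s, ⨅ y, F i y ≤ ⨅ y, ∑ i ∈ s, F i y :=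
  le_iInf fun y => Finset.sum_le_sum fun _ _ => iInf_le _ y

theorem ENNReal.sum_ofReal_le_one_of_sum_le_one {ι : Type*} [Fintype ι] (s : Finset ι)
    {f : ι → ℝ} (hf0 : ∀ i, 0 ≤ f i) (hsum : ∑ i, f i ≤ 1) :
    ∑ i ∈ s, ENNReal.ofReal (f i) ≤ 1 :=
  calc ∑ i ∈ s, ENNReal.ofReal (f i)
      ≤ ∑ i, ENNReal.ofReal (f i) := Finset.sum_le_sum_of_subset s.subset_univ
    _ = ENNReal.ofReal (∑ i, f i) := (ENNReal.ofReal_sum_of_nonneg fun i _ => hf0 i).symm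
    _ ≤ 1 := ENNReal.ofReal_le_one.mpr hsum

theorem stmt16_general {X : Type*} (K : ℕ) (A : Finset (Fin K))
    (c : X → X → ℝ≥0∞) (hsymm : ∀ x y, c x y = c y x)
    (f : Fin K → X → ℝ) (hf0 : ∀ i x, 0 ≤ f i x)
    (hsum : ∀ x, ∑ i, f i x ≤ 1)
    (g : Fin K → X → ℝ≥0∞)
    (hg : ∀ i x, g i x = ⨅ y : X, ENNReal.ofReal (f i y) + c x y)
    (x : Fin K → X) :
    ∑ i ∈ A, g i (x i) ≤ 1 + ⨅ y : X, ∑ i ∈ A, c y (x i) := by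
  simp only [hg]
  calc ∑ i ∈ A, ⨅ y, (ENNReal.ofReal (f i y) + c (x i) y)
      ≤ ⨅ y, ∑ i ∈ A, (ENNReal.ofReal (f i y) + c (x i) y) := A.sum_iInf_le_iInf_sum _
    _ = ⨅ y, (∑ i ∈ A, ENNReal.ofReal (f i y) + ∑ i ∈ A, c y (x i)) := by
        simp only [Finset.sum_add_distrib, hsymm]
    _ ≤ ⨅ y, (1 + ∑ i ∈ A, c y (x i)) := by
        gcongr with y
        exact ENNReal.sum_ofReal_le_one_of_sum_le_one A (fun i => hf0 i y) (hsum y)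
    _ = 1 + ⨅ y, ∑ i ∈ A, c y (x i) := ENNReal.add_iInf.symm

/-- Feasibility of the infimal convolutions `gᵢ(x) = inf_{x̃} {fᵢ(x̃) + c(x,x̃)}` for the
dual MOT constraints: `Σ_{i∈A} gᵢ(xᵢ) ≤ 1 + c_A((xᵢ)_{i∈A})`, where
`c_A((xᵢ)) = inf_{x'} Σ_{i∈A} c(x', xᵢ)`. -/
theorem stmt16 {X : Type*} (K : ℕ) (A : Finset (Fin K)) (hA : A.Nonempty)
    (c : X → X → ℝ≥0∞) (hsymm : ∀ x y, c x y = c y x)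
    (f : Fin K → X → ℝ) (hf0 : ∀ i x, 0 ≤ f i x) (hf1 : ∀ i x, f i x ≤ 1)
    (hsum : ∀ x, ∑ i, f i x ≤ 1)
    (g : Fin K → X → ℝ≥0∞)
    (hg : ∀ i x, g i x = ⨅ y : X, ENNReal.ofReal (f i y) + c x y)
    (x : Fin K → X) :
    ∑ i ∈ A, g i (x i) ≤ 1 + ⨅ y : X, ∑ i ∈ A, c y (x i) :=
  stmt16_general K A c hsymm f hf0 hsum g hg x
end

section
/- Let X be a metric space, K ∈ ℕ, μ₁,…,μ_K finite Borel measures on X, and ε > 0. For Borel measurable f : X → Δ_K define the open-ball adversarial risk R^o_ε(f) := Σ_i ∫ sup_{x̃∈B_ε(x)}(1 − f_i(x̃)) dμ_i(x) and the nonlocal total-variation functional TV_ε(f_i, μ_i) := (1/ε) ∫ sup_{x̃∈B_ε(x)} ( f_i(x) − f_i(x̃) ) dμ_i(x). Then R^o_ε(f) = Σ_i ∫ (1 − f_i(x)) dμ_i(x) + ε Σ_i TV_ε(f_i, μ_i). In particular, minimizing the open-ball adversarial risk is equivalent to minimizing the nominal risk plus ε times the sum of the nonlocal TV terms. -/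
/-!
Write `1 - fᵢ(x̃) = (1 - fᵢ(x)) + (fᵢ(x) - fᵢ(x̃))` and take the supremum over `x̃ ∈ B_ε(x)`.
Because the centre `x` lies in the open ball, the oscillation supremum is nonnegative, and
`fᵢ ≤ 1` makes the nominal term nonnegative; so `ENNReal.ofReal` splits the sum, the lower
integral is additive, and the oscillation integral is exactly `ε · TV_ε(fᵢ, μᵢ)`.
-/

open MeasureTheory ENNReal Set

theorem csSup_image_const_add {α β : Type*} [ConditionallyCompleteLattice α] [AddGroup α]
    [AddLeftMono α] {s : Set β} (g : β → α) (c : α) (hne : s.Nonempty)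
    (hbdd : BddAbove (g '' s)) :
    sSup ((fun y => c + g y) '' s) = c + sSup (g '' s) := by
  simpa only [OrderIso.addLeft_apply, image_image] using
    ((OrderIso.addLeft c).map_csSup' (hne.image g) hbdd).symm

theorem ofReal_sSup_sub_image_eq_add {β : Type*} {s : Set β} {g : β → ℝ} {x : β} {c : ℝ}
    (hx : x ∈ s) (hbdd : BddBelow (g '' s)) (hc : g x ≤ c) :
    ENNReal.ofReal (sSup ((fun y => c - g y) '' s)) =
      ENNReal.ofReal (c - g x) + ENNReal.ofReal (sSup ((fun y => g x - g y) '' s)) := by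
  have hosc : BddAbove ((fun y => g x - g y) '' s) := by
    have hanti : Antitone (g x - ·) := fun _ _ h => sub_le_sub_left h (g x)
    simpa only [image_image] using hanti.map_bddBelow hbdd
  have hsplit : (fun y => c - g y) = fun y => (c - g x) + (g x - g y) := by
    funext y; ring
  rw [hsplit, csSup_image_const_add _ _ ⟨x, hx⟩ hosc,
    ENNReal.ofReal_add (sub_nonneg.2 hc) (le_csSup hosc ⟨x, hx, sub_self _⟩)]

theorem lintegral_ofReal_sSup_sub_image_ball {X : Type*} [PseudoMetricSpace X]
    [MeasurableSpace X] (μ : Measure X) {g : X → ℝ} (hg : Measurable g)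
    (hbdd : BddBelow (range g)) {c : ℝ} (hc : ∀ x, g x ≤ c) {ε : ℝ} (hε : 0 < ε) :
    ∫⁻ x, ENNReal.ofReal (sSup ((fun y => c - g y) '' Metric.ball x ε)) ∂μ =
      ∫⁻ x, ENNReal.ofReal (c - g x) ∂μ +
        ∫⁻ x, ENNReal.ofReal (sSup ((fun y => g x - g y) '' Metric.ball x ε)) ∂μ := by
  have hnominal : Measurable fun x => ENNReal.ofReal (c - g x) :=
    (measurable_const.sub hg).ennreal_ofReal
  rw [← lintegral_add_left hnominal]
  exact lintegral_congr fun x =>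
    ofReal_sSup_sub_image_eq_add (Metric.mem_ball_self hε)
      (hbdd.mono (image_subset_range _ _)) (hc x)

theorem stmt19_general {X : Type*} [MetricSpace X] [MeasurableSpace X]
    (K : ℕ) (μ : Fin K → Measure X)
    (ε : ℝ) (hε : 0 < ε)
    (f : Fin K → X → ℝ) (hmeas : ∀ i, Measurable (f i))
    (hf0 : ∀ i x, 0 ≤ f i x) (hsum : ∀ x, ∑ i, f i x ≤ 1)
    (TV : Fin K → ℝ≥0∞)
    (hTV : ∀ i, TV i = ENNReal.ofReal (1 / ε) *
      ∫⁻ x, ENNReal.ofReal (sSup ((fun y => f i x - f i y) '' Metric.ball x ε)) ∂(μ i)) :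
    ∑ i, ∫⁻ x, ENNReal.ofReal (sSup ((fun y => 1 - f i y) '' Metric.ball x ε)) ∂(μ i) =
      ∑ i, ∫⁻ x, ENNReal.ofReal (1 - f i x) ∂(μ i) + ENNReal.ofReal ε * ∑ i, TV i := by
  have hle : ∀ i x, f i x ≤ 1 := fun i x =>
    (Finset.single_le_sum (fun j _ => hf0 j x) (Finset.mem_univ i)).trans (hsum x)
  have hεTV : ∀ i, ENNReal.ofReal ε * TV i =
      ∫⁻ x, ENNReal.ofReal (sSup ((fun y => f i x - f i y) '' Metric.ball x ε)) ∂(μ i) := by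
    intro i
    rw [hTV i, ← mul_assoc, ← ENNReal.ofReal_mul hε.le, mul_one_div_cancel hε.ne',
      ENNReal.ofReal_one, one_mul]
  rw [Finset.mul_sum, ← Finset.sum_add_distrib]
  refine Finset.sum_congr rfl fun i _ => ?_
  rw [hεTV i]
  exact lintegral_ofReal_sSup_sub_image_ball (μ i) (hmeas i) ⟨0, forall_mem_range.2 (hf0 i)⟩
    (hle i) hε

/-- The open-ball adversarial risk decomposes as the nominal risk plus `ε` times the
sum of the nonlocal total variation terms
`TV_ε(fᵢ, μᵢ) = (1/ε) ∫ sup_{x̃ ∈ B_ε(x)} (fᵢ(x) - fᵢ(x̃)) dμᵢ(x)`. -/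
theorem stmt19 {X : Type*} [MetricSpace X] [MeasurableSpace X] [BorelSpace X]
    (K : ℕ) (μ : Fin K → Measure X) (hfin : ∀ i, IsFiniteMeasure (μ i))
    (ε : ℝ) (hε : 0 < ε)
    (f : Fin K → X → ℝ) (hmeas : ∀ i, Measurable (f i))
    (hf0 : ∀ i x, 0 ≤ f i x) (hsum : ∀ x, ∑ i, f i x ≤ 1)
    (TV : Fin K → ℝ≥0∞)
    (hTV : ∀ i, TV i = ENNReal.ofReal (1 / ε) *
      ∫⁻ x, ENNReal.ofReal (sSup ((fun y => f i x - f i y) '' Metric.ball x ε)) ∂(μ i)) :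
    ∑ i, ∫⁻ x, ENNReal.ofReal (sSup ((fun y => 1 - f i y) '' Metric.ball x ε)) ∂(μ i) =
      ∑ i, ∫⁻ x, ENNReal.ofReal (1 - f i x) ∂(μ i) + ENNReal.ofReal ε * ∑ i, TV i :=
  stmt19_general K μ ε hε f hmeas hf0 hsum TV hTV
end
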